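/- Let N > ps, p > 1, s ∈ (0,1). Suppose u ∈ Ẇ^{s,p}(ℝ^N) weakly solves (-Δ_p)^s u = f in ℝ^N with f ∈ L¹(ℝ^N). Then ‖u‖_{L^{p*/p', ∞}} ≤ C(N,p,s) ‖f‖_{L¹}^{1/(p−1)}, i.e. sup_{k>0} k |{|u| > k}|^{p'/p*} ≤ C ‖f‖_1^{1/(p−1)}, where p* = Np/(N−ps) and p' = p/(p−1). -/

import Mathlib

open MeasureTheory
open scoped ENNReal

/-- Gagliardo seminorm to the `p`-th power. -/
noncomputable def gaglP (N : ℕ) (s p : ℝ) (u : EuclideanSpace ℝ (Fin N) → ℝ) : ℝ≥0∞ :=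
  ∫⁻ x, ∫⁻ y, ENNReal.ofReal (|u x - u y| ^ p / ‖x - y‖ ^ ((N : ℝ) + p * s))

/-- `u` weakly solves `(-Δ_p)^s u = f` in `ℝ^N`: for every suitable test function `φ`
(i.e. `φ ∈ Ẇ^{s,p}` with `fφ ∈ L¹`), the fractional `p`-Laplacian form of `u` at `φ`
equals `∫ f φ`. -/
def IsWeakSolution (N : ℕ) (s p : ℝ) (u f : EuclideanSpace ℝ (Fin N) → ℝ) : Prop :=
  ∀ φ : EuclideanSpace ℝ (Fin N) → ℝ, Measurable φ → gaglP N s p φ < ⊤ →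
    Integrable (fun x => f x * φ x) →
    (∫ x, ∫ y, (|u x - u y| ^ (p - 2) * (u x - u y) * (φ x - φ y)) /
        ‖x - y‖ ^ ((N : ℝ) + p * s)) = ∫ x, f x * φ x

/-!
Testing the equation with `T(u) = min {k/2, (|u| - k/2)₊} sgn u` bounds the Gagliardo energy of
`T(u)` by `(k/2) ‖f‖₁`, because for a monotone `1`-Lipschitz `T` the weak-form integrand dominates
the Gagliardo integrand of `T(u)` pointwise. On `{|u| > k}` we have `|T(u)| = k/2`, so a weak-type
fractional Sobolev inequality `λ |{w > λ}|^{1/p*} ≤ C [w]_{s,p}` for `w = |T(u)|` at `λ = k/4`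
gives the estimate. That inequality is proved directly: where `w > λ`, a ball of measure
`2 |{w > λ/2}|` still contains `|{w > λ/2}|` worth of points with `w ≤ λ/2`, whence
`|{w > λ}| ≲ [w]^p λ^{-p} |{w > λ/2}|^{ps/N}`; as `ps/N < 1`, this recursion bounds the supremum
of `λ^{p*} |{w > λ}|` over `λ ≤ Λ`, which is finite because `|{w > 0}| < ∞`.
-/

namespace FractionalPLaplacian

lemma sub_le_sub_of_lipschitzWith_one {T : ℝ → ℝ} (hT : LipschitzWith 1 T) {a b : ℝ}
    (hab : a ≤ b) : T b - T a ≤ b - a := by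
  have := hT.dist_le_mul b a
  rw [NNReal.coe_one, one_mul, Real.dist_eq, Real.dist_eq, abs_of_nonneg (sub_nonneg.2 hab)] at this
  exact (le_abs_self _).trans this

def clamp (c t : ℝ) : ℝ := max (-c) (min c t)

lemma monotone_clamp (c : ℝ) : Monotone (clamp c) := fun _ _ h =>
  max_le_max le_rfl (min_le_min le_rfl h)

lemma lipschitzWith_clamp (c : ℝ) : LipschitzWith 1 (clamp c) :=
  (LipschitzWith.id.const_min c).const_max (-c)

lemma clamp_of_le {c t : ℝ} (hc : 0 ≤ c) (ht : c ≤ t) : clamp c t = c := by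
  rw [clamp, min_eq_left ht, max_eq_right (by linarith)]

lemma clamp_of_le_neg {c t : ℝ} (hc : 0 ≤ c) (ht : t ≤ -c) : clamp c t = -c := by
  rw [clamp, min_eq_right (by linarith), max_eq_left ht]

lemma monotone_sub_clamp (c : ℝ) : Monotone fun t => t - clamp c t := fun a b h => by
  have := sub_le_sub_of_lipschitzWith_one (lipschitzWith_clamp c) h
  linarith

lemma lipschitzWith_sub_clamp (c : ℝ) : LipschitzWith 1 fun t => t - clamp c t := by
  refine LipschitzWith.of_le_add_mul 1 fun a b => ?_
  rw [NNReal.coe_one, one_mul]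
  rcases le_total a b with h | h
  · linarith [monotone_sub_clamp c h, dist_nonneg (x := a) (y := b)]
  · rw [Real.dist_eq, abs_of_nonneg (sub_nonneg.2 h)]
    linarith [monotone_clamp c h]

/-- `trunc c t = min {c, (|t| - c)₊} sgn t`. -/
def trunc (c t : ℝ) : ℝ := clamp c (t - clamp c t)

lemma monotone_trunc (c : ℝ) : Monotone (trunc c) :=
  (monotone_clamp c).comp (monotone_sub_clamp c)

lemma lipschitzWith_trunc (c : ℝ) : LipschitzWith 1 (trunc c) :=
  mul_one (1 : NNReal) ▸ (lipschitzWith_clamp c).comp (lipschitzWith_sub_clamp c)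

lemma abs_trunc_le {c : ℝ} (hc : 0 ≤ c) (t : ℝ) : |trunc c t| ≤ c :=
  abs_le.2 ⟨le_max_left _ _, max_le (by linarith) (min_le_left _ _)⟩

lemma trunc_eq_zero {c t : ℝ} (hc : 0 ≤ c) (ht : |t| ≤ c) : trunc c t = 0 := by
  obtain ⟨h1, h2⟩ := abs_le.1 ht
  simp only [trunc, clamp]
  rw [min_eq_right h2, max_eq_right h1, sub_self, min_eq_right hc, max_eq_right (by linarith)]

lemma lt_abs_of_abs_trunc_pos {c t : ℝ} (hc : 0 ≤ c) (h : 0 < |trunc c t|) : c < |t| :=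
  not_le.1 fun ht => by simp [trunc_eq_zero hc ht] at h

lemma abs_trunc_eq {c t : ℝ} (hc : 0 ≤ c) (ht : 2 * c ≤ |t|) : |trunc c t| = c := by
  rw [trunc]
  rcases le_abs'.1 ht with h | h
  · rw [clamp_of_le_neg (t := t) hc (by linarith), clamp_of_le_neg hc (by linarith), abs_neg,
      abs_of_nonneg hc]
  · rw [clamp_of_le (t := t) hc (by linarith), clamp_of_le hc (by linarith), abs_of_nonneg hc]

lemma rpow_le_mul_and_mul_le_rpow {p C D : ℝ} (hp : 1 < p) (hC : 0 ≤ C) (hCD : C ≤ D) :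
    C ^ p ≤ D ^ (p - 2) * (D * C) ∧ D ^ (p - 2) * (D * C) ≤ D ^ p := by
  have hD : 0 ≤ D := hC.trans hCD
  have hsplit : ∀ x : ℝ, 0 ≤ x → x ^ p = x ^ (p - 1) * x := fun x hx => by
    rw [← Real.rpow_add_one' hx (by linarith), sub_add_cancel]
  rw [← mul_assoc, ← Real.rpow_add_one' hD (by linarith), show p - 2 + 1 = p - 1 by ring,
    hsplit C hC, hsplit D hD]
  exact ⟨mul_le_mul_of_nonneg_right (Real.rpow_le_rpow hC hCD (by linarith)) hC,
    mul_le_mul_of_nonneg_left hCD (Real.rpow_nonneg hD _)⟩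

lemma abs_sub_rpow_le_pLaplacianForm_and_le_abs_sub_rpow {p : ℝ} (hp : 1 < p) {T : ℝ → ℝ}
    (hT : Monotone T) (hT1 : LipschitzWith 1 T) (a b : ℝ) :
    |T a - T b| ^ p ≤ |a - b| ^ (p - 2) * (a - b) * (T a - T b) ∧
      |a - b| ^ (p - 2) * (a - b) * (T a - T b) ≤ |a - b| ^ p := by
  have hsign : 0 ≤ (a - b) * (T a - T b) := by
    rcases le_total a b with h | h
    · exact mul_nonneg_of_nonpos_of_nonpos (by linarith) (sub_nonpos.2 (hT h))
    · exact mul_nonneg (by linarith) (sub_nonneg.2 (hT h))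
  have hlip : |T a - T b| ≤ |a - b| := by
    simpa [Real.dist_eq] using hT1.dist_le_mul a b
  rw [mul_assoc, ← abs_of_nonneg hsign, abs_mul]
  exact rpow_le_mul_and_mul_le_rpow hp (abs_nonneg _) hlip

lemma gaglP_mono {N : ℕ} {s p : ℝ} (hp : 0 ≤ p) {u v : EuclideanSpace ℝ (Fin N) → ℝ}
    (h : ∀ x y, |v x - v y| ≤ |u x - u y|) : gaglP N s p v ≤ gaglP N s p u :=
  lintegral_mono fun x => lintegral_mono fun y => ENNReal.ofReal_le_ofReal <|
    div_le_div_of_nonneg_right (Real.rpow_le_rpow (abs_nonneg _) (h x y) hp)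
      (Real.rpow_nonneg (norm_nonneg _) _)

lemma ofReal_integral_integral_eq_lintegral {α β : Type*} [MeasurableSpace α]
    [MeasurableSpace β] {μ : Measure α} {ν : Measure β} [SFinite μ] [SFinite ν]
    {g : α → β → ℝ} (hg : Measurable (Function.uncurry g)) (hg0 : ∀ x y, 0 ≤ g x y)
    (hfin : ∫⁻ x, ∫⁻ y, ENNReal.ofReal (g x y) ∂ν ∂μ ≠ ⊤) :
    ENNReal.ofReal (∫ x, ∫ y, g x y ∂ν ∂μ) = ∫⁻ x, ∫⁻ y, ENNReal.ofReal (g x y) ∂ν ∂μ := by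
  have hnonneg : 0 ≤ᵐ[μ.prod ν] Function.uncurry g := ae_of_all _ fun z => hg0 z.1 z.2
  have hprod := lintegral_lintegral (μ := μ) (ν := ν) (f := fun x y => ENNReal.ofReal (g x y))
    hg.ennreal_ofReal.aemeasurable
  have hint : Integrable (Function.uncurry g) (μ.prod ν) :=
    ⟨hg.aestronglyMeasurable, (hasFiniteIntegral_iff_ofReal hnonneg).2 (hprod ▸ hfin.lt_top)⟩
  rw [integral_integral hint, hprod]
  exact ofReal_integral_eq_lintegral_ofReal hint hnonneg

lemma gaglP_comp_le_of_isWeakSolution {N : ℕ} {s p : ℝ} (hp : 1 < p)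
    {u f : EuclideanSpace ℝ (Fin N) → ℝ} (hu : Measurable u) (hgu : gaglP N s p u < ⊤)
    (hf : Integrable f) (hsol : IsWeakSolution N s p u f) {T : ℝ → ℝ} (hT : Monotone T)
    (hT1 : LipschitzWith 1 T) {c : ℝ} (hTc : ∀ t, |T t| ≤ c) :
    gaglP N s p (fun x => T (u x)) ≤ ENNReal.ofReal (c * ∫ x, |f x|) := by
  set ψ := fun x => T (u x)
  have hψ : Measurable ψ := hT1.continuous.measurable.comp hu
  have hgψ : gaglP N s p ψ ≤ gaglP N s p u := gaglP_mono (by linarith) fun x y => by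
    simpa [Real.dist_eq] using hT1.dist_le_mul (u x) (u y)
  have hfψ : Integrable fun x => f x * ψ x :=
    hf.mul_bdd hψ.aestronglyMeasurable (ae_of_all _ fun x => (Real.norm_eq_abs _).le.trans (hTc _))
  set g := fun x y => (|u x - u y| ^ (p - 2) * (u x - u y) * (ψ x - ψ y)) /
    ‖x - y‖ ^ ((N : ℝ) + p * s)
  have hg : Measurable (Function.uncurry g) := by
    simp only [g, Function.uncurry_def]
    fun_prop
  have hbounds : ∀ x y, |ψ x - ψ y| ^ p / ‖x - y‖ ^ ((N : ℝ) + p * s) ≤ g x y ∧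
      g x y ≤ |u x - u y| ^ p / ‖x - y‖ ^ ((N : ℝ) + p * s) := fun x y =>
    have hweight := Real.rpow_nonneg (norm_nonneg (x - y)) ((N : ℝ) + p * s)
    have key := abs_sub_rpow_le_pLaplacianForm_and_le_abs_sub_rpow hp hT hT1 (u x) (u y)
    ⟨div_le_div_of_nonneg_right key.1 hweight, div_le_div_of_nonneg_right key.2 hweight⟩
  have hg0 : ∀ x y, 0 ≤ g x y := fun x y =>
    (div_nonneg (Real.rpow_nonneg (abs_nonneg _) _) (Real.rpow_nonneg (norm_nonneg _) _)).trans
      (hbounds x y).1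
  have hfin : ∫⁻ x, ∫⁻ y, ENNReal.ofReal (g x y) ≠ ⊤ := ne_top_of_le_ne_top hgu.ne <|
    lintegral_mono fun x => lintegral_mono fun y => ENNReal.ofReal_le_ofReal (hbounds x y).2
  calc gaglP N s p ψ ≤ ∫⁻ x, ∫⁻ y, ENNReal.ofReal (g x y) :=
        lintegral_mono fun x => lintegral_mono fun y => ENNReal.ofReal_le_ofReal (hbounds x y).1
    _ = ENNReal.ofReal (∫ x, f x * ψ x) := by
        rw [← ofReal_integral_integral_eq_lintegral hg hg0 hfin, hsol ψ hψ (hgψ.trans_lt hgu) hfψ]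
    _ ≤ ENNReal.ofReal (c * ∫ x, |f x|) := by
        rw [← integral_const_mul]
        refine ENNReal.ofReal_le_ofReal (integral_mono hfψ (hf.abs.const_mul c) fun x => ?_)
        calc f x * ψ x ≤ |f x| * |ψ x| := (le_abs_self _).trans (abs_mul _ _).le
          _ ≤ c * |f x| := by rw [mul_comm]; exact mul_le_mul_of_nonneg_right (hTc _) (abs_nonneg _)

/-- A point where `w > b` sees, inside a ball of radius `R` around it, at least
`|B_R| - |{w > a}|` of points where `w ≤ a`; each contributes `(b - a)^p / R^{N+ps}` to the
energy. -/
lemma ofReal_mul_volume_lt_le_gaglP {N : ℕ} {s p : ℝ} (hp : 0 ≤ p) (hα : 0 ≤ (N : ℝ) + p * s)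
    {w : EuclideanSpace ℝ (Fin N) → ℝ} (hw : Measurable w) {a b : ℝ} (hab : a < b) (R : ℝ) :
    ENNReal.ofReal ((b - a) ^ p / R ^ ((N : ℝ) + p * s)) *
        (volume (Metric.ball (0 : EuclideanSpace ℝ (Fin N)) R) - volume {x | a < w x}) *
        volume {x | b < w x} ≤ gaglP N s p w := by
  set κ := ENNReal.ofReal ((b - a) ^ p / R ^ ((N : ℝ) + p * s))
  set D := volume (Metric.ball (0 : EuclideanSpace ℝ (Fin N)) R) - volume {x | a < w x}
  have hinner : ∀ x ∈ {x | b < w x},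
      κ * D ≤ ∫⁻ y, ENNReal.ofReal (|w x - w y| ^ p / ‖x - y‖ ^ ((N : ℝ) + p * s)) := by
    intro x hx
    set S := Metric.ball x R ∩ {y | w y ≤ a}
    have hS : MeasurableSet S := measurableSet_ball.inter (measurableSet_le hw measurable_const)
    have hDS : D ≤ volume S := by
      refine tsub_le_iff_right.2 ?_
      rw [← Measure.addHaar_ball_center volume x]
      refine (measure_mono fun y hy => ?_).trans (measure_union_le S {x | a < w x})
      by_cases hy' : w y ≤ a
      exacts [Or.inl ⟨hy, hy'⟩, Or.inr (not_le.1 hy')]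
    have hkernel : ∀ y ∈ S,
        κ ≤ ENNReal.ofReal (|w x - w y| ^ p / ‖x - y‖ ^ ((N : ℝ) + p * s)) := by
      rintro y ⟨hyR, hya⟩
      have hgap : b - a ≤ |w x - w y| := by
        linarith [le_abs_self (w x - w y), show b < w x from hx, show w y ≤ a from hya]
      have hxy : 0 < ‖x - y‖ := norm_pos_iff.2 (sub_ne_zero.2 fun h => by
        rw [h] at hx; exact absurd (lt_of_lt_of_le hx hya) (not_lt.2 hab.le))
      have hxyR : ‖x - y‖ ≤ R := by
        rw [← dist_eq_norm, dist_comm]; exact (Metric.mem_ball.1 hyR).le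
      exact ENNReal.ofReal_le_ofReal <| div_le_div₀ (Real.rpow_nonneg (abs_nonneg _) _)
        (Real.rpow_le_rpow (by linarith) hgap hp) (Real.rpow_pos_of_pos hxy _)
        (Real.rpow_le_rpow hxy.le hxyR hα)
    calc κ * D ≤ κ * volume S := by gcongr
      _ = ∫⁻ y, S.indicator (fun _ => κ) y := (lintegral_indicator_const hS κ).symm
      _ ≤ _ := lintegral_mono (Set.indicator_le hkernel)
  calc κ * D * volume {x | b < w x}
      = ∫⁻ x, {x | b < w x}.indicator (fun _ => κ * D) x :=
        (lintegral_indicator_const (measurableSet_lt measurable_const hw) _).symm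
    _ ≤ gaglP N s p w := lintegral_mono (Set.indicator_le hinner)

/-- Choosing `|B_R| = 2 |{w > a}|` in `ofReal_mul_volume_lt_le_gaglP`. -/
lemma exists_ofReal_mul_volume_lt_le {N : ℕ} (hN : 0 < N) {s p : ℝ} (hp : 0 ≤ p)
    (hps : 0 ≤ p * s) : ∃ K > 0, ∀ w : EuclideanSpace ℝ (Fin N) → ℝ, Measurable w →
      ∀ a b : ℝ, a < b → volume {x | a < w x} ≠ ⊤ →
        ENNReal.ofReal ((b - a) ^ p) * volume {x | b < w x} ≤
          ENNReal.ofReal K * gaglP N s p w * volume {x | a < w x} ^ (p * s / N) := by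
  have : Nonempty (Fin N) := ⟨⟨0, hN⟩⟩
  have hNR : (0 : ℝ) < N := Nat.cast_pos.2 hN
  set α : ℝ := N + p * s
  set σ : ℝ := p * s / N
  have hασ : α / N = σ + 1 := by simp only [α, σ]; field_simp; ring
  set ω := volume (Metric.ball (0 : EuclideanSpace ℝ (Fin N)) 1)
  have hω : ω ≠ ⊤ := measure_ball_lt_top.ne
  have hω0 : ω ≠ 0 := (Metric.measure_ball_pos _ _ one_pos).ne'
  have hωR : 0 < ω.toReal := ENNReal.toReal_pos hω0 hω
  set K := (2 / ω.toReal) ^ (σ + 1)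
  refine ⟨K, by positivity, fun w hw a b hab hfin => ?_⟩
  set m := volume {x | a < w x}
  rcases eq_or_ne m 0 with hm0 | hm0
  · have : volume {x | b < w x} = 0 := measure_mono_null (fun x (hx : b < w x) =>
      show a < w x by linarith) hm0
    simp [this]
  have hmR : 0 < m.toReal := ENNReal.toReal_pos hm0 hfin
  set R := (2 * m.toReal / ω.toReal) ^ ((N : ℝ)⁻¹)
  have hball : volume (Metric.ball (0 : EuclideanSpace ℝ (Fin N)) R) = m + m := by
    rw [Measure.addHaar_ball _ _ (by positivity), finrank_euclideanSpace_fin,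
      Real.rpow_inv_natCast_pow (by positivity) hN.ne', ENNReal.ofReal_div_of_pos hωR,
      ENNReal.ofReal_toReal hω, ENNReal.div_mul_cancel hω0 hω,
      ENNReal.ofReal_mul zero_le_two, ENNReal.ofReal_ofNat, ENNReal.ofReal_toReal hfin, two_mul]
  have hRα : R ^ α = K * (m.toReal ^ σ * m.toReal) := by
    rw [← Real.rpow_mul (by positivity), inv_mul_eq_div, mul_div_right_comm,
      Real.mul_rpow (by positivity) hmR.le, hασ, Real.rpow_add_one hmR.ne']
  have hsplit : ENNReal.ofReal ((b - a) ^ p) = ENNReal.ofReal K * m ^ σ *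
      ENNReal.ofReal ((b - a) ^ p / R ^ α * m.toReal) := by
    have hmσ : m ^ σ = ENNReal.ofReal (m.toReal ^ σ) := by
      rw [← ENNReal.ofReal_rpow_of_pos hmR, ENNReal.ofReal_toReal hfin]
    rw [hmσ, ← ENNReal.ofReal_mul (by positivity), ← ENNReal.ofReal_mul (by positivity), hRα]
    have hK : 0 < K := by positivity
    congr 1
    field_simp
  have hlevel := ofReal_mul_volume_lt_le_gaglP (s := s) hp (by positivity) hw hab R
  rw [hball, ENNReal.add_sub_cancel_right hfin] at hlevel
  calc ENNReal.ofReal ((b - a) ^ p) * volume {x | b < w x}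
      = ENNReal.ofReal K * m ^ σ *
          (ENNReal.ofReal ((b - a) ^ p / R ^ α) * m * volume {x | b < w x}) := by
        rw [hsplit, ENNReal.ofReal_mul (by positivity), ENNReal.ofReal_toReal hfin]; ring
    _ ≤ ENNReal.ofReal K * m ^ σ * gaglP N s p w := by gcongr
    _ = ENNReal.ofReal K * gaglP N s p w * m ^ σ := by ring

lemma le_rpow_of_le_mul_rpow {x Q : ℝ≥0∞} {σ : ℝ} (hσ : σ < 1) (hx : x ≠ ⊤)
    (h : x ≤ Q * x ^ σ) : x ≤ Q ^ (1 / (1 - σ)) := by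
  rcases eq_or_ne x 0 with rfl | hx0
  · exact zero_le
  have hxσ0 : x ^ σ ≠ 0 := (ENNReal.rpow_pos (pos_iff_ne_zero.2 hx0) hx).ne'
  have hxσ : x ^ σ ≠ ⊤ := ENNReal.rpow_ne_top_of_ne_zero hx0 hx
  have hpow : x ^ (1 - σ) ≤ Q := by
    refine (ENNReal.mul_le_mul_iff_left hxσ0 hxσ).1 ?_
    rwa [← ENNReal.rpow_add _ _ hx0 hx, sub_add_cancel, ENNReal.rpow_one]
  calc x = (x ^ (1 - σ)) ^ (1 / (1 - σ)) := by
        rw [← ENNReal.rpow_mul, mul_one_div_cancel (by linarith), ENNReal.rpow_one]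
    _ ≤ Q ^ (1 / (1 - σ)) := ENNReal.rpow_le_rpow hpow (by have := sub_pos.2 hσ; positivity)

lemma le_rpow_of_le_mul_rpow_half {g : ℝ → ℝ≥0∞} {Q : ℝ≥0∞} {σ Λ : ℝ} (hσ0 : 0 ≤ σ)
    (hσ1 : σ < 1) (hΛ : 0 < Λ) (hbdd : ∃ M ≠ ⊤, ∀ t ∈ Set.Ioc 0 Λ, g t ≤ M)
    (hrec : ∀ t ∈ Set.Ioc 0 Λ, g t ≤ Q * g (t / 2) ^ σ) : g Λ ≤ Q ^ (1 / (1 - σ)) := by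
  obtain ⟨M, hM, hgM⟩ := hbdd
  set S := ⨆ t ∈ Set.Ioc 0 Λ, g t
  have hgS : ∀ t ∈ Set.Ioc 0 Λ, g t ≤ S := fun t ht => le_biSup g ht
  have hS : S ≠ ⊤ := ne_top_of_le_ne_top hM (iSup₂_le hgM)
  refine (hgS Λ ⟨hΛ, le_rfl⟩).trans (le_rpow_of_le_mul_rpow hσ1 hS (iSup₂_le fun t ht => ?_))
  have ht2 : t / 2 ∈ Set.Ioc 0 Λ := ⟨half_pos ht.1, by linarith [ht.1, ht.2]⟩
  calc g t ≤ Q * g (t / 2) ^ σ := hrec t ht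
    _ ≤ Q * S ^ σ := by gcongr; exact hgS _ ht2

/-- Weak-type fractional Sobolev inequality `‖w‖_{L^{p*,∞}} ≤ C [w]_{s,p}`, `p* = Np/(N - ps)`. -/
theorem exists_weak_sobolev {N : ℕ} {s p : ℝ} (hp : 0 < p) (hs : 0 ≤ s) (hps : p * s < N) :
    ∃ C > 0, ∀ w : EuclideanSpace ℝ (Fin N) → ℝ, Measurable w → volume {x | 0 < w x} ≠ ⊤ →
      ∀ t > 0, ENNReal.ofReal t * volume {x | t < w x} ^ (1 / ((N : ℝ) * p / (N - p * s))) ≤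
        ENNReal.ofReal C * gaglP N s p w ^ (1 / p) := by
  have hps0 : 0 ≤ p * s := by positivity
  have hNR : (0 : ℝ) < N := hps0.trans_lt hps
  obtain ⟨K, hK, hlevel⟩ := exists_ofReal_mul_volume_lt_le (Nat.cast_pos.1 hNR) hp.le hps0
  set σ := p * s / N
  set γ := (N : ℝ) * p / (N - p * s)
  have hσ0 : 0 ≤ σ := by positivity
  have hσ1 : σ < 1 := (div_lt_one hNR).2 hps
  have hNps : (N : ℝ) - p * s ≠ 0 := by linarith
  have hγ : 0 < γ := div_pos (by positivity) (by linarith)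
  have hγσ : γ * σ + p = γ := by simp only [γ, σ]; field_simp; ring
  have hσγ : 1 / (1 - σ) * (1 / γ) = 1 / p := by
    simp only [γ, σ]; field_simp
  refine ⟨(2 ^ γ * K) ^ (1 / p), by positivity, fun w hw hfin Λ hΛ => ?_⟩
  set g := fun t => ENNReal.ofReal (t ^ γ) * volume {x | t < w x}
  set Q := ENNReal.ofReal (2 ^ γ * K) * gaglP N s p w
  have hrec : ∀ t ∈ Set.Ioc 0 Λ, g t ≤ Q * g (t / 2) ^ σ := by
    rintro t ⟨ht, -⟩
    have hhalf := hlevel w hw (t / 2) t (by linarith) <|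
      ne_top_of_le_ne_top hfin (measure_mono fun x (hx : t / 2 < w x) => show 0 < w x by linarith)
    have hsplit : ENNReal.ofReal (t ^ γ) = ENNReal.ofReal (2 ^ γ) *
        ENNReal.ofReal ((t / 2) ^ γ) ^ σ * ENNReal.ofReal ((t - t / 2) ^ p) := by
      rw [ENNReal.ofReal_rpow_of_nonneg (by positivity) hσ0, ← ENNReal.ofReal_mul (by positivity),
        ← ENNReal.ofReal_mul (by positivity), ← Real.rpow_mul (by positivity), sub_half,
        mul_assoc, ← Real.rpow_add (by positivity), hγσ,
        ← Real.mul_rpow (by norm_num) (by positivity), mul_div_cancel₀ _ two_ne_zero]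
    calc g t = ENNReal.ofReal (2 ^ γ) * ENNReal.ofReal ((t / 2) ^ γ) ^ σ *
          (ENNReal.ofReal ((t - t / 2) ^ p) * volume {x | t < w x}) := by
          simp only [g]; rw [hsplit]; ring
      _ ≤ ENNReal.ofReal (2 ^ γ) * ENNReal.ofReal ((t / 2) ^ γ) ^ σ *
          (ENNReal.ofReal K * gaglP N s p w * volume {x | t / 2 < w x} ^ σ) := by gcongr
      _ = Q * g (t / 2) ^ σ := by
          simp only [g, Q]
          rw [ENNReal.mul_rpow_of_nonneg _ _ hσ0, ENNReal.ofReal_mul (by positivity)]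
          ring
  have hbdd : ∃ M ≠ ⊤, ∀ t ∈ Set.Ioc 0 Λ, g t ≤ M :=
    ⟨ENNReal.ofReal (Λ ^ γ) * volume {x | 0 < w x}, ENNReal.mul_ne_top ENNReal.ofReal_ne_top hfin,
      fun t ⟨ht, htΛ⟩ => mul_le_mul' (ENNReal.ofReal_le_ofReal (by gcongr))
        (measure_mono fun x (hx : t < w x) => show 0 < w x by linarith)⟩
  have hgΛ := le_rpow_of_le_mul_rpow_half hσ0 hσ1 hΛ hbdd hrec
  calc ENNReal.ofReal Λ * volume {x | Λ < w x} ^ (1 / γ) = g Λ ^ (1 / γ) := by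
        simp only [g]
        rw [← ENNReal.ofReal_rpow_of_nonneg hΛ.le hγ.le,
          ENNReal.mul_rpow_of_nonneg _ _ (by positivity), one_div, ENNReal.rpow_rpow_inv hγ.ne']
    _ ≤ (Q ^ (1 / (1 - σ))) ^ (1 / γ) := ENNReal.rpow_le_rpow hgΛ (by positivity)
    _ = ENNReal.ofReal ((2 ^ γ * K) ^ (1 / p)) * gaglP N s p w ^ (1 / p) := by
        rw [← ENNReal.rpow_mul, hσγ, ENNReal.mul_rpow_of_nonneg _ _ (by positivity),
          ENNReal.ofReal_rpow_of_nonneg (by positivity) (by positivity)]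

lemma mul_rpow_conjExponent_le {p k x A F : ℝ} (hp : 1 < p) (hk : 0 < k) (hx : 0 ≤ x)
    (hA : 0 ≤ A) (hF : 0 ≤ F) (h : k * x ≤ A * (k * F) ^ (1 / p)) :
    k * x ^ (p / (p - 1)) ≤ A ^ (p / (p - 1)) * F ^ (1 / (p - 1)) := by
  have hp1 : 0 < p - 1 := by linarith
  have hexp : 1 / p * (p / (p - 1)) = 1 / (p - 1) := by field_simp
  have hkq : k ^ (p / (p - 1)) = k ^ (1 / (p - 1)) * k := by
    rw [← Real.rpow_add_one hk.ne']; congr 1; field_simp; ring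
  have hpow := Real.rpow_le_rpow (by positivity) h (by positivity : 0 ≤ p / (p - 1))
  rw [Real.mul_rpow hk.le hx, Real.mul_rpow hA (by positivity), ← Real.rpow_mul (by positivity),
    hexp, Real.mul_rpow hk.le hF, hkq] at hpow
  refine le_of_mul_le_mul_left ?_ (by positivity : 0 < k ^ (1 / (p - 1)))
  linarith

lemma ofReal_mul_rpow_conjExponent_le {p γ k A F : ℝ} {M : ℝ≥0∞} (hp : 1 < p) (hγ : 0 ≤ γ)
    (hk : 0 < k) (hA : 0 ≤ A) (hF : 0 ≤ F) (hM : M ≠ ⊤)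
    (h : ENNReal.ofReal k * M ^ (1 / γ) ≤ ENNReal.ofReal A * ENNReal.ofReal (k * F) ^ (1 / p)) :
    ENNReal.ofReal k * M ^ (p / (p - 1) / γ) ≤
      ENNReal.ofReal (A ^ (p / (p - 1)) * F ^ (1 / (p - 1))) := by
  have hMx : M ^ (1 / γ) = ENNReal.ofReal (M.toReal ^ (1 / γ)) := by
    rw [← ENNReal.ofReal_rpow_of_nonneg ENNReal.toReal_nonneg (by positivity),
      ENNReal.ofReal_toReal hM]
  have hMq : M ^ (p / (p - 1) / γ) = ENNReal.ofReal ((M.toReal ^ (1 / γ)) ^ (p / (p - 1))) := by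
    have : 0 < p - 1 := by linarith
    rw [show p / (p - 1) / γ = 1 / γ * (p / (p - 1)) by ring, ENNReal.rpow_mul, hMx,
      ENNReal.ofReal_rpow_of_nonneg (by positivity) (by positivity)]
  rw [hMx, ← ENNReal.ofReal_mul hk.le,
    ENNReal.ofReal_rpow_of_nonneg (by positivity) (by positivity), ← ENNReal.ofReal_mul hA,
    ENNReal.ofReal_le_ofReal_iff (by positivity)] at h
  rw [hMq, ← ENNReal.ofReal_mul hk.le]
  exact ENNReal.ofReal_le_ofReal (mul_rpow_conjExponent_le hp hk (by positivity) hA hF h)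

end FractionalPLaplacian

open FractionalPLaplacian

theorem stmt16_general (N : ℕ) (p s : ℝ) (hp : 1 < p) (hs0 : 0 < s)
    (hps : p * s < N) :
    ∃ C > 0, ∀ u f : EuclideanSpace ℝ (Fin N) → ℝ,
      Measurable u → gaglP N s p u < ⊤ →
      (∀ a > 0, volume {x | a < |u x|} < ⊤) →
      Integrable f → IsWeakSolution N s p u f →
      ∀ k > 0,
        ENNReal.ofReal k * (volume {x | k < |u x|}) ^
            ((p / (p - 1)) / ((N : ℝ) * p / ((N : ℝ) - p * s))) ≤
          ENNReal.ofReal (C * (∫ x, |f x|) ^ (1 / (p - 1))) := by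
  obtain ⟨C, hC, hsob⟩ := exists_weak_sobolev (by linarith : 0 < p) hs0.le hps
  refine ⟨(4 * C) ^ (p / (p - 1)), by positivity, fun u f hu hgu hlev hf hsol k hk => ?_⟩
  set w := fun x => |trunc (k / 2) (u x)|
  have henergy : gaglP N s p w ≤ ENNReal.ofReal (k / 2 * ∫ x, |f x|) :=
    (gaglP_mono (by linarith) fun x y => abs_abs_sub_abs_le_abs_sub _ _).trans <|
      gaglP_comp_le_of_isWeakSolution hp hu hgu hf hsol (monotone_trunc _) (lipschitzWith_trunc _)
        (abs_trunc_le (by linarith))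
  have hsupp : {x | 0 < w x} ⊆ {x | k / 2 < |u x|} := fun _ hx =>
    lt_abs_of_abs_trunc_pos (by linarith) hx
  have hlevel : {x | k < |u x|} ⊆ {x | k / 4 < w x} := fun x (hx : k < |u x|) => by
    show k / 4 < |trunc (k / 2) (u x)|
    rw [abs_trunc_eq (by linarith) (by linarith)]; linarith
  have hweak := hsob w (((lipschitzWith_trunc _).continuous.measurable.comp hu).abs)
    (ne_top_of_le_ne_top (hlev _ (by positivity)).ne (measure_mono hsupp)) (k / 4) (by positivity)
  set γ := (N : ℝ) * p / (N - p * s)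
  have hγ : 0 ≤ γ := div_nonneg (by positivity) (by linarith)
  refine ofReal_mul_rpow_conjExponent_le hp hγ hk (by positivity)
    (integral_nonneg fun x => abs_nonneg _) (hlev k hk).ne ?_
  calc ENNReal.ofReal k * volume {x | k < |u x|} ^ (1 / γ)
      ≤ 4 * (ENNReal.ofReal (k / 4) * volume {x | k / 4 < w x} ^ (1 / γ)) := by
        rw [← mul_assoc, ← ENNReal.ofReal_ofNat 4, ← ENNReal.ofReal_mul (by norm_num),
          mul_div_cancel₀ _ four_ne_zero]
        gcongr
    _ ≤ 4 * (ENNReal.ofReal C * ENNReal.ofReal (k / 2 * ∫ x, |f x|) ^ (1 / p)) := by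
        grw [hweak, henergy]
    _ ≤ ENNReal.ofReal (4 * C) * ENNReal.ofReal (k * ∫ x, |f x|) ^ (1 / p) := by
        rw [ENNReal.ofReal_mul (p := 4) (by norm_num), ENNReal.ofReal_ofNat, mul_assoc]
        gcongr
        linarith

/-- Weak `L^{p*/p'}` estimate for solutions of `(-Δ_p)^s u = f` with `f ∈ L¹`:
`sup_{k>0} k |{|u|>k}|^{p'/p*} ≤ C ‖f‖₁^{1/(p−1)}`. -/
theorem stmt16 (N : ℕ) (p s : ℝ) (hp : 1 < p) (hs0 : 0 < s) (hs1 : s < 1)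
    (hps : p * s < N) :
    ∃ C > 0, ∀ u f : EuclideanSpace ℝ (Fin N) → ℝ,
      Measurable u → gaglP N s p u < ⊤ →
      (∀ a > 0, volume {x | a < |u x|} < ⊤) →
      Integrable f → IsWeakSolution N s p u f →
      ∀ k > 0,
        ENNReal.ofReal k * (volume {x | k < |u x|}) ^
            ((p / (p - 1)) / ((N : ℝ) * p / ((N : ℝ) - p * s))) ≤
          ENNReal.ofReal (C * (∫ x, |f x|) ^ (1 / (p - 1))) :=
  stmt16_general N p s hp hs0 hps
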